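/- For any matrix Δ ∈ ℝ^{p×k}, the matrix I + Δᵀ Δ is symmetric positive definite, and ‖ Δ (I + Δᵀ Δ)^{-1/2} ‖_2 = ‖Δ‖_2 / (1 + ‖Δ‖_2²)^{1/2}, where (I + Δᵀ Δ)^{-1/2} is the inverse of the unique symmetric positive definite square root of I + Δᵀ Δ and ‖·‖_2 is the spectral norm. -/

import Mathlib

open Matrix

open scoped ComplexOrder in
/-- The square root of a positive semidefinite matrix (the definition Mathlib had in
December 2024, since removed from Mathlib). -/
noncomputable def Matrix.PosSemidef.sqrt {n 𝕜 : Type*} [Fintype n] [RCLike 𝕜] [DecidableEq n]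
    {A : Matrix n n 𝕜} (hA : A.PosSemidef) : Matrix n n 𝕜 :=
  hA.1.eigenvectorUnitary.1 * diagonal ((↑) ∘ (√·) ∘ hA.1.eigenvalues) *
    (star hA.1.eigenvectorUnitary : Matrix n n 𝕜)

/-- The spectral (operator 2-) norm of a real matrix. -/
noncomputable def matSpectralNorm {p q : ℕ} (A : Matrix (Fin p) (Fin q) ℝ) : ℝ :=
  ‖LinearMap.toContinuousLinearMap (Matrix.toEuclideanLin A)‖

/-!
Let `S` be the square root of `1 + Δᵀ Δ`. From `Sᵀ S = 1 + Δᵀ Δ` one gets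
`‖S x‖² = ‖x‖² + ‖Δ x‖²`, so with `y = S x` the ratio `‖Δ S⁻¹ y‖ / ‖y‖` equals `r / √(1 + r²)`
for `r = ‖Δ x‖ / ‖x‖`. This is increasing in `r`, hence bounded by its value at `r = ‖Δ‖`,
which is attained at a point of the closed unit ball where `Δ` attains its norm.
-/

namespace ContinuousLinearMap

theorem exists_mem_closedBall_norm_apply_eq_opNorm {𝕜 E F : Type*} [DenselyNormedField 𝕜]
    [NormedAddCommGroup E] [NormedSpace 𝕜 E] [ProperSpace E] [SeminormedAddCommGroup F]
    [NormedSpace 𝕜 F] (f : E →L[𝕜] F) : ∃ x ∈ Metric.closedBall (0 : E) 1, ‖f x‖ = ‖f‖ := by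
  have hmem :=
    ((isCompact_closedBall (0 : E) 1).image (continuous_norm.comp f.continuous)).sSup_mem
      ((Metric.nonempty_closedBall.2 zero_le_one).image _)
  rw [Function.comp_def, f.sSup_unitClosedBall_eq_norm] at hmem
  simpa using hmem

theorem opNorm_comp_eq_div_sqrt {E F : Type*} [NormedAddCommGroup E] [NormedSpace ℝ E]
    [ProperSpace E] [SeminormedAddCommGroup F] [NormedSpace ℝ F] (f : E →L[ℝ] F) (t : E →L[ℝ] E)
    (ht : Function.Surjective t) (hnorm : ∀ y, ‖y‖ ^ 2 = ‖t y‖ ^ 2 + ‖f (t y)‖ ^ 2) :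
    ‖f.comp t‖ = ‖f‖ / √(1 + ‖f‖ ^ 2) := by
  have hden : 0 < √(1 + ‖f‖ ^ 2) := Real.sqrt_pos.2 (by positivity)
  apply le_antisymm
  · refine (f.comp t).opNorm_le_bound (by positivity) fun y => ?_
    rw [comp_apply, div_mul_eq_mul_div, le_div_iff₀ hden,
      ← pow_le_pow_iff_left₀ (by positivity) (by positivity) two_ne_zero, mul_pow, mul_pow,
      Real.sq_sqrt (by positivity), hnorm y]
    have hsq : ‖f (t y)‖ ^ 2 ≤ ‖f‖ ^ 2 * ‖t y‖ ^ 2 := by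
      rw [← mul_pow]
      gcongr
      exact f.le_opNorm (t y)
    linarith
  · obtain ⟨x, hx, hfx⟩ := f.exists_mem_closedBall_norm_apply_eq_opNorm
    obtain ⟨y, rfl⟩ := ht x
    have hy : ‖y‖ ≤ √(1 + ‖f‖ ^ 2) := by
      rw [Real.le_sqrt (norm_nonneg _) (by positivity), hnorm y, hfx]
      have hty : ‖t y‖ ≤ 1 := mem_closedBall_zero_iff.1 hx
      nlinarith [norm_nonneg (t y)]
    rw [div_le_iff₀ hden]
    calc ‖f‖ = ‖(f.comp t) y‖ := hfx.symm
      _ ≤ ‖f.comp t‖ * ‖y‖ := (f.comp t).le_opNorm y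
      _ ≤ ‖f.comp t‖ * √(1 + ‖f‖ ^ 2) := by gcongr

end ContinuousLinearMap

namespace Matrix

variable {𝕜 m n : Type*} [RCLike 𝕜] [Fintype m] [Fintype n] [DecidableEq n]

theorem norm_toEuclideanLin_sq [DecidableEq m] (A : Matrix m n 𝕜) (x : EuclideanSpace 𝕜 n) :
    ‖toEuclideanLin A x‖ ^ 2 = RCLike.re (inner 𝕜 x (toEuclideanLin (Aᴴ * A) x)) := by
  rw [toLpLin_mul_same, LinearMap.comp_apply, toEuclideanLin_conjTranspose_eq_adjoint,
    LinearMap.adjoint_inner_right, inner_self_eq_norm_sq]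

theorem norm_toEuclideanLin_sq_eq_add {l : Type*} [Fintype l] [DecidableEq m] [DecidableEq l]
    (A : Matrix m n 𝕜) (B : Matrix l n 𝕜) (h : Aᴴ * A = 1 + Bᴴ * B) (x : EuclideanSpace 𝕜 n) :
    ‖toEuclideanLin A x‖ ^ 2 = ‖x‖ ^ 2 + ‖toEuclideanLin B x‖ ^ 2 := by
  rw [norm_toEuclideanLin_sq, norm_toEuclideanLin_sq, h, map_add, toLpLin_one, LinearMap.add_apply,
    LinearMap.id_apply, inner_add_right, map_add, inner_self_eq_norm_sq]

open scoped ComplexOrder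

theorem posDef_one_add_conjTranspose_mul_self (A : Matrix m n 𝕜) :
    (1 + Aᴴ * A).PosDef :=
  PosDef.one.add_posSemidef (posSemidef_conjTranspose_mul_self A)

namespace PosSemidef

theorem posSemidef_sqrt {A : Matrix n n 𝕜} (hA : A.PosSemidef) : hA.sqrt.PosSemidef :=
  (PosSemidef.diagonal fun i => by simp).mul_mul_conjTranspose_same _

theorem sqrt_mul_self {A : Matrix n n 𝕜} (hA : A.PosSemidef) : hA.sqrt * hA.sqrt = A := by
  have hU : (star hA.1.eigenvectorUnitary : Matrix n n 𝕜) * hA.1.eigenvectorUnitary = 1 :=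
    Unitary.coe_star_mul_self _
  conv_rhs => rw [hA.1.spectral_theorem, Unitary.conjStarAlgAut_apply]
  simp only [PosSemidef.sqrt, mul_assoc]
  rw [← mul_assoc (star _), hU, one_mul, ← mul_assoc (diagonal _), diagonal_mul_diagonal]
  congr 3
  funext i
  simp [← RCLike.ofReal_mul, Real.mul_self_sqrt (hA.eigenvalues_nonneg i)]

end PosSemidef

end Matrix

theorem matSpectralNorm_mul_inv_eq_div_sqrt {p k : ℕ} (Δ : Matrix (Fin p) (Fin k) ℝ)
    (S : Matrix (Fin k) (Fin k) ℝ) (hS : Sᵀ * S = 1 + Δᵀ * Δ) :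
    matSpectralNorm (Δ * S⁻¹) = matSpectralNorm Δ / √(1 + matSpectralNorm Δ ^ 2) := by
  rw [← conjTranspose_eq_transpose_of_trivial, ← conjTranspose_eq_transpose_of_trivial] at hS
  have hdet : IsUnit S.det := by
    have h := (hS ▸ posDef_one_add_conjTranspose_mul_self Δ).isUnit
    rw [isUnit_iff_isUnit_det, det_mul] at h
    exact isUnit_of_mul_isUnit_right h
  set f := LinearMap.toContinuousLinearMap (toEuclideanLin Δ)
  set t := LinearMap.toContinuousLinearMap (toEuclideanLin S⁻¹)
  have hSt (y : EuclideanSpace ℝ (Fin k)) : toEuclideanLin S (t y) = y := by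
    simp [t, ← LinearMap.comp_apply, ← toLpLin_mul_same, mul_nonsing_inv _ hdet]
  have ht : Function.Surjective t := fun x => ⟨toEuclideanLin S x, by
    simp [t, ← LinearMap.comp_apply, ← toLpLin_mul_same, nonsing_inv_mul _ hdet]⟩
  have hnorm (y : EuclideanSpace ℝ (Fin k)) : ‖y‖ ^ 2 = ‖t y‖ ^ 2 + ‖f (t y)‖ ^ 2 := by
    conv_lhs => rw [← hSt y]
    exact norm_toEuclideanLin_sq_eq_add S Δ hS (t y)
  calc matSpectralNorm (Δ * S⁻¹) = ‖f.comp t‖ := by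
        simp only [matSpectralNorm, toLpLin_mul_same]
        rfl
    _ = _ := f.opNorm_comp_eq_div_sqrt t ht hnorm

/-- For any `Δ ∈ ℝ^{p×k}`, the matrix `I + Δᵀ Δ` is symmetric positive
definite, and `‖Δ (I + Δᵀ Δ)^{-1/2}‖₂ = ‖Δ‖₂ / (1 + ‖Δ‖₂²)^{1/2}`, where
`(I + Δᵀ Δ)^{-1/2}` is the inverse of the unique symmetric positive definite square root
of `I + Δᵀ Δ`. -/
theorem norm_delta_inv_sqrt {p k : ℕ} (Δ : Matrix (Fin p) (Fin k) ℝ) :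
    (1 + Δᵀ * Δ).PosDef ∧
    ∀ h : (1 + Δᵀ * Δ).PosSemidef,
      matSpectralNorm (Δ * (h.sqrt)⁻¹) =
        matSpectralNorm Δ / Real.sqrt (1 + matSpectralNorm Δ ^ 2) := by
  refine ⟨conjTranspose_eq_transpose_of_trivial Δ ▸ posDef_one_add_conjTranspose_mul_self Δ,
    fun h => matSpectralNorm_mul_inv_eq_div_sqrt Δ h.sqrt ?_⟩
  rw [← conjTranspose_eq_transpose_of_trivial, h.posSemidef_sqrt.isHermitian.eq, h.sqrt_mul_self]
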